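/- arXiv:1911.02447 — 6 statements merged into one kernel-verified Lean document; each statement's English description precedes it below -/
import Mathlib

section
/- For all x > 0, sinh³(x) > x³ cosh(x). -/
/-!
Since `sinh³ x = (sinh 3x - 3 sinh x) / 4`, the Taylor coefficient of `x^m` (`m` odd) in
`sinh³ x` is `(3^m - 3) / (4 m!)`, while in `x³ cosh x` it is `m (m - 1) (m - 2) / m!`.
The two agree for `m = 3, 5`, and the first is strictly larger from `m = 7` on, so for `x > 0`
the series of `sinh³ x` dominates that of `x³ cosh x` termwise, strictly at `x^7`.
-/

open Real Nat

theorem hasSum_sinh_pow_three (x : ℝ) :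
    HasSum (fun n ↦ (3 ^ (2 * n + 1) - 3) / 4 * (x ^ (2 * n + 1) / (2 * n + 1)!))
      (sinh x ^ 3) := by
  have h := ((hasSum_sinh (3 * x)).sub ((hasSum_sinh x).mul_left 3)).div_const 4
  rw [sinh_three_mul, add_sub_cancel_right, mul_div_cancel_left₀ _ four_ne_zero] at h
  refine h.congr_fun fun n ↦ ?_
  rw [mul_pow]
  ring

theorem hasSum_pow_three_mul_cosh (x : ℝ) :
    HasSum (fun n : ℕ ↦ (2 * n + 1) * (2 * n) * (2 * n - 1) * (x ^ (2 * n + 1) / (2 * n + 1)!))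
      (x ^ 3 * cosh x) := by
  rw [← hasSum_nat_add_iff' 1]
  simp only [Finset.sum_range_one, CharP.cast_eq_zero, mul_zero, zero_mul, sub_zero]
  refine ((hasSum_cosh x).mul_left (x ^ 3)).congr_fun fun n ↦ ?_
  rw [show 2 * (n + 1) + 1 = 2 * n + 1 + 1 + 1 by ring, factorial_succ, factorial_succ,
    factorial_succ]
  push_cast
  field_simp
  ring

theorem four_mul_falling_three_le_three_pow_sub_three (n : ℕ) :
    4 * ((2 * n + 1) * (2 * n) * (2 * n - 1) : ℝ) ≤ 3 ^ (2 * n + 1) - 3 := by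
  induction n with
  | zero => norm_num
  | succ n ih =>
    rw [show 2 * (n + 1) + 1 = 2 * n + 1 + 2 by ring, pow_add]
    push_cast
    rcases n.eq_zero_or_pos with rfl | hn
    · norm_num
    · have hn : (1 : ℝ) ≤ n := by exact_mod_cast hn
      -- with `p n = 32 n³ - 8 n + 3`, one has `9 p n - p (n + 1) = 32 n (8 n + 5) (n - 1)`
      nlinarith [mul_nonneg (by positivity : (0 : ℝ) ≤ 32 * n * (8 * n + 5)) (sub_nonneg.2 hn)]

/-- For all `x > 0`, `sinh³ x > x³ cosh x`. -/
theorem sinh_cubed_gt_cube_mul_cosh (x : ℝ) (hx : 0 < x) :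
    Real.sinh x ^ 3 > x ^ 3 * Real.cosh x := by
  refine hasSum_lt (i := 3) (fun n ↦ ?_) ?_ (hasSum_pow_three_mul_cosh x) (hasSum_sinh_pow_three x)
  · have := four_mul_falling_three_le_three_pow_sub_three n
    dsimp only
    gcongr
    linarith
  · norm_num
    gcongr
    norm_num
end

section
/- Define h : [0,∞) → ℝ by h(x) = coth(x) − 1/x for x > 0 and h(0) = 0. Then h is continuous at 0, h is strictly increasing on [0,∞), h is concave on (0,∞), and the right derivative of h at 0 equals 1/3. -/
/-!
For `x > 0` we have `h x = (x cosh x - sinh x) / (x sinh x)`, `h' x = 1/x² - 1/sinh² x > 0` and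
`h'' x = 2 cosh x / sinh³ x - 2/x³`, so concavity amounts to `x³ cosh x ≤ sinh³ x`. With
`t = (cosh x)^(1/3)`, the function `sinh x / t - x` vanishes at `0` and has derivative
`(t² - 1)² (2t² + 1) / (3t⁴) ≥ 0`, which gives `x t ≤ sinh x`; cubing is the inequality.

At `0`, the bounds `x³/3 ≤ x cosh x - sinh x ≤ x² sinh x / 3` and `sinh x ≤ x cosh x` squeeze the
difference quotient `h x / x` between `1 / (3 cosh x)` and `1/3`.
-/

open Real Set Filter
open scoped Topology

/-- `h(x) = coth x − 1/x` for `x > 0`, with `h(0) = 0`. -/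
noncomputable def hfun (x : ℝ) : ℝ :=
  if x = 0 then 0 else Real.cosh x / Real.sinh x - 1 / x

lemma nonneg_of_hasDerivAt_of_nonneg {f f' : ℝ → ℝ} (hf : ∀ x, HasDerivAt f (f' x) x)
    (h0 : f 0 = 0) (hf' : ∀ x, 0 < x → 0 ≤ f' x) {x : ℝ} (hx : 0 ≤ x) : 0 ≤ f x :=
  h0 ▸ monotoneOn_of_hasDerivWithinAt_nonneg (convex_Ici 0)
    (fun y _ ↦ (hf y).continuousAt.continuousWithinAt) (fun y _ ↦ (hf y).hasDerivWithinAt)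
    (by simpa using hf') self_mem_Ici hx hx

namespace Real

lemma sinh_le_mul_cosh {x : ℝ} (hx : 0 ≤ x) : sinh x ≤ x * cosh x := by
  have := nonneg_of_hasDerivAt_of_nonneg (f := fun y ↦ y * cosh y - sinh y)
    (fun y ↦ (((hasDerivAt_id y).mul (hasDerivAt_cosh y)).sub (hasDerivAt_sinh y)).congr_deriv
      (by simp)) (by simp) (fun y hy ↦ mul_nonneg hy.le (sinh_nonneg_iff.2 hy.le)) hx
  linarith

lemma cube_div_three_le_mul_cosh_sub_sinh {x : ℝ} (hx : 0 ≤ x) :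
    x ^ 3 / 3 ≤ x * cosh x - sinh x := by
  have := nonneg_of_hasDerivAt_of_nonneg (f := fun y ↦ y * cosh y - sinh y - y ^ 3 / 3)
    (fun y ↦ ((((hasDerivAt_id y).mul (hasDerivAt_cosh y)).sub (hasDerivAt_sinh y)).sub
      ((hasDerivAt_pow 3 y).div_const 3)).congr_deriv (by simp only [id_eq, Nat.cast_ofNat]; ring))
    (by simp) (fun y hy ↦ mul_nonneg hy.le (sub_nonneg.2 (self_le_sinh_iff.2 hy.le))) hx
  linarith

lemma mul_cosh_sub_sinh_le {x : ℝ} (hx : 0 ≤ x) :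
    x * cosh x - sinh x ≤ x ^ 2 * sinh x / 3 := by
  have := nonneg_of_hasDerivAt_of_nonneg
    (f := fun y ↦ y ^ 2 * sinh y / 3 - (y * cosh y - sinh y))
    (f' := fun y ↦ y * (y * cosh y - sinh y) / 3)
    (fun y ↦ ((((hasDerivAt_pow 2 y).mul (hasDerivAt_sinh y)).div_const 3).sub
      (((hasDerivAt_id y).mul (hasDerivAt_cosh y)).sub (hasDerivAt_sinh y))).congr_deriv
      (by simp only [id_eq, Nat.cast_ofNat]; ring))
    (by simp) (fun y hy ↦ by have := sinh_le_mul_cosh hy.le; positivity) hx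
  linarith

lemma cube_mul_cosh_le_sinh_cube {x : ℝ} (hx : 0 ≤ x) : x ^ 3 * cosh x ≤ sinh x ^ 3 := by
  set t : ℝ → ℝ := fun y ↦ cosh y ^ (3⁻¹ : ℝ)
  have ht : ∀ y, 0 < t y := fun y ↦ rpow_pos_of_pos (cosh_pos y) _
  have ht3 : ∀ y, t y ^ 3 = cosh y := fun y ↦ by
    simpa using rpow_inv_natCast_pow (cosh_pos y).le (n := 3) (by norm_num)
  have hderiv : ∀ y, HasDerivAt (fun y ↦ sinh y / t y - y)
      ((t y ^ 2 - 1) ^ 2 * (2 * t y ^ 2 + 1) / (3 * t y ^ 4)) y := by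
    intro y
    have hdt : HasDerivAt t (sinh y * 3⁻¹ * (t y / cosh y)) y := by
      have := (hasDerivAt_cosh y).rpow_const (p := 3⁻¹) (Or.inl (cosh_pos y).ne')
      rwa [rpow_sub_one (cosh_pos y).ne'] at this
    refine (((hasDerivAt_sinh y).div hdt (ht y).ne').sub (hasDerivAt_id y)).congr_deriv ?_
    have hs : sinh y ^ 2 = t y ^ 6 - 1 := by
      rw [show t y ^ 6 = (t y ^ 3) ^ 2 by ring, ht3, cosh_sq]; ring
    have := (ht y).ne'
    rw [← ht3]
    field_simp
    linear_combination -hs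
  have key := nonneg_of_hasDerivAt_of_nonneg hderiv (by simp) (fun y _ ↦ by
    have := ht y; positivity) hx
  have hle : x * t x ≤ sinh x := by
    have := (le_div_iff₀ (ht x)).1 (sub_nonneg.1 key); linarith
  calc x ^ 3 * cosh x = (x * t x) ^ 3 := by rw [mul_pow, ht3]
    _ ≤ sinh x ^ 3 := pow_le_pow_left₀ (mul_nonneg hx (ht x).le) hle 3

end Real

lemma hfun_eq_div {x : ℝ} (hx : 0 < x) :
    hfun x = (x * cosh x - sinh x) / (x * sinh x) := by
  have := (sinh_pos_iff.2 hx).ne'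
  rw [hfun, if_neg hx.ne']
  field_simp

lemma hasDerivAt_hfun {x : ℝ} (hx : 0 < x) :
    HasDerivAt hfun ((x ^ 2)⁻¹ - (sinh x ^ 2)⁻¹) x := by
  have hs := (sinh_pos_iff.2 hx).ne'
  have hcoth : HasDerivAt (fun y ↦ cosh y / sinh y) (-(sinh x ^ 2)⁻¹) x :=
    ((hasDerivAt_cosh x).div (hasDerivAt_sinh x) hs).congr_deriv (by
      field_simp; linear_combination -cosh_sq_sub_sinh_sq x)
  refine ((hcoth.sub (hasDerivAt_inv hx.ne')).congr_deriv (by ring)).congr_of_eventuallyEq ?_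
  filter_upwards [lt_mem_nhds hx] with y hy
  simp only [hfun, if_neg hy.ne', one_div, Pi.sub_apply]

lemma hasDerivAt_deriv_hfun {x : ℝ} (hx : 0 < x) :
    HasDerivAt (fun y ↦ (y ^ 2)⁻¹ - (sinh y ^ 2)⁻¹) (2 * cosh x / sinh x ^ 3 - 2 / x ^ 3) x := by
  have hs := (sinh_pos_iff.2 hx).ne'
  exact (((hasDerivAt_pow 2 x).inv (pow_ne_zero 2 hx.ne')).sub
    (((hasDerivAt_sinh x).pow 2).inv (pow_ne_zero 2 hs))).congr_deriv (by
      simp only [Pi.pow_apply]; field_simp; ring)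

lemma slope_hfun_zero_mem_Icc {x : ℝ} (hx : 0 < x) :
    slope hfun 0 x ∈ Icc (1 / (3 * cosh x)) (1 / 3) := by
  have hs := sinh_pos_iff.2 hx
  have hc := cosh_pos x
  rw [slope_def_field, hfun_eq_div hx, show hfun 0 = 0 from if_pos rfl, sub_zero, sub_zero,
    div_div, mem_Icc, div_le_div_iff₀ (by positivity) (by positivity),
    div_le_div_iff₀ (by positivity) (by positivity)]
  have h₁ := cube_div_three_le_mul_cosh_sub_sinh hx.le
  have h₂ := mul_cosh_sub_sinh_le hx.le
  have h₃ := sinh_le_mul_cosh hx.le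
  constructor
  · nlinarith [mul_le_mul_of_nonneg_left h₃ (sq_nonneg x)]
  · nlinarith

lemma hasDerivWithinAt_hfun_zero : HasDerivWithinAt hfun (1 / 3) (Ioi 0) 0 := by
  rw [hasDerivWithinAt_iff_tendsto_slope, sdiff_singleton_eq_self self_notMem_Ioi]
  have hlow : Tendsto (fun y ↦ 1 / (3 * cosh y)) (𝓝[>] 0) (𝓝 (1 / 3)) := by
    have : ContinuousAt (fun y ↦ 1 / (3 * cosh y)) 0 := by fun_prop (disch := positivity)
    simpa using this.tendsto.mono_left nhdsWithin_le_nhds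
  refine tendsto_of_tendsto_of_tendsto_of_le_of_le' hlow tendsto_const_nhds ?_ ?_ <;>
  filter_upwards [self_mem_nhdsWithin] with y hy
  · exact (slope_hfun_zero_mem_Icc hy).1
  · exact (slope_hfun_zero_mem_Icc hy).2

lemma continuousOn_hfun : ContinuousOn hfun (Ici 0) := by
  intro x hx
  rcases (mem_Ici.1 hx).eq_or_lt with rfl | hx
  · rw [← Ioi_insert, continuousWithinAt_insert_self]
    exact hasDerivWithinAt_hfun_zero.continuousWithinAt
  · exact (hasDerivAt_hfun hx).continuousAt.continuousWithinAt

lemma strictMonoOn_hfun : StrictMonoOn hfun (Ici 0) :=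
  strictMonoOn_of_hasDerivWithinAt_pos (convex_Ici 0) continuousOn_hfun
    (fun x hx ↦ (hasDerivAt_hfun (by simpa using hx)).hasDerivWithinAt) fun x hx ↦ by
      have hx : 0 < x := by simpa using hx
      have := self_lt_sinh_iff.2 hx
      simpa using inv_strictAnti₀ (by positivity) (pow_lt_pow_left₀ this hx.le two_ne_zero)

lemma concaveOn_hfun : ConcaveOn ℝ (Ioi 0) hfun :=
  concaveOn_of_hasDerivWithinAt2_nonpos (convex_Ioi 0)
    (continuousOn_hfun.mono Ioi_subset_Ici_self)
    (fun x hx ↦ (hasDerivAt_hfun (by simpa using hx)).hasDerivWithinAt)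
    (fun x hx ↦ (hasDerivAt_deriv_hfun (by simpa using hx)).hasDerivWithinAt) fun x hx ↦ by
      have hx : 0 < x := by simpa using hx
      have := sinh_pos_iff.2 hx
      rw [sub_nonpos, div_le_div_iff₀ (by positivity) (by positivity)]
      nlinarith [cube_mul_cosh_le_sinh_cube hx.le]

/-- `h` is continuous at `0` (from the right), strictly increasing on `[0,∞)`,
concave on `(0,∞)`, and its right derivative at `0` is `1/3`. -/
theorem hfun_properties :
    ContinuousWithinAt hfun (Set.Ici 0) 0 ∧
    StrictMonoOn hfun (Set.Ici 0) ∧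
    ConcaveOn ℝ (Set.Ioi 0) hfun ∧
    HasDerivWithinAt hfun (1 / 3) (Set.Ioi 0) 0 :=
  ⟨continuousOn_hfun 0 self_mem_Ici, strictMonoOn_hfun, concaveOn_hfun, hasDerivWithinAt_hfun_zero⟩
end

section
/- Let β, J > 0 and define h(x) = coth(x) − 1/x with h(0) = 0. The equation ξ = βJ·h(ξ) admits a (unique) solution ξ > 0 if and only if βJ > 3. -/
open Real Set

variable {x : ℝ}

lemma pos_of_hasDerivAt_of_pos {f f' : ℝ → ℝ} (hf : ∀ x, HasDerivAt f (f' x) x)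
    (hf0 : f 0 = 0) (hf' : ∀ x, 0 < x → 0 < f' x) {x : ℝ} (hx : 0 < x) : 0 < f x := by
  have hmono : StrictMonoOn f (Ici 0) :=
    strictMonoOn_of_deriv_pos (convex_Ici 0)
      (fun y _ => (hf y).continuousAt.continuousWithinAt)
      (fun y hy => by rw [(hf y).deriv]; exact hf' y (by simpa using hy))
  simpa [hf0] using hmono self_mem_Ici hx.le hx

namespace Real

lemma hasDerivAt_mul_cosh_sub_sinh (x : ℝ) :
    HasDerivAt (fun t => t * cosh t - sinh t) (x * sinh x) x :=
  (((hasDerivAt_id' x).mul (hasDerivAt_cosh x)).sub (hasDerivAt_sinh x)).congr_deriv (by ring)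

lemma sinh_lt_mul_cosh (hx : 0 < x) : sinh x < x * cosh x :=
  sub_pos.mp <| pos_of_hasDerivAt_of_pos hasDerivAt_mul_cosh_sub_sinh (by simp)
    (fun t ht => mul_pos ht (sinh_pos_iff.mpr ht)) hx

lemma pow_three_div_three_lt_mul_cosh_sub_sinh (hx : 0 < x) :
    x ^ 3 / 3 < x * cosh x - sinh x :=
  sub_pos.mp <| pos_of_hasDerivAt_of_pos
    (f := fun t => t * cosh t - sinh t - t ^ 3 / 3) (f' := fun t => t * (sinh t - t))
    (fun t => ((hasDerivAt_mul_cosh_sub_sinh t).sub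
      ((hasDerivAt_pow 3 t).div_const 3)).congr_deriv (by ring))
    (by simp) (fun t ht => mul_pos ht (sub_pos.mpr (self_lt_sinh_iff.mpr ht))) hx

lemma three_mul_mul_cosh_sub_sinh_lt (hx : 0 < x) :
    3 * (x * cosh x - sinh x) < x ^ 2 * sinh x :=
  sub_pos.mp <| pos_of_hasDerivAt_of_pos
    (f := fun t => t ^ 2 * sinh t - 3 * (t * cosh t - sinh t))
    (f' := fun t => t * (t * cosh t - sinh t))
    (fun t => (((hasDerivAt_pow 2 t).mul (hasDerivAt_sinh t)).sub
      ((hasDerivAt_mul_cosh_sub_sinh t).const_mul 3)).congr_deriv (by ring))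
    (by simp) (fun t ht => mul_pos ht (sub_pos.mpr (sinh_lt_mul_cosh ht))) hx

lemma mul_cosh_sub_sinh_lt_mul_sinh (hx : 0 < x) : x * cosh x - sinh x < x * sinh x :=
  sub_pos.mp <| pos_of_hasDerivAt_of_pos
    (f := fun t => t * sinh t - (t * cosh t - sinh t))
    (f' := fun t => sinh t + t * (cosh t - sinh t))
    (fun t => (((hasDerivAt_id' t).mul (hasDerivAt_sinh t)).sub
      (hasDerivAt_mul_cosh_sub_sinh t)).congr_deriv (by ring))
    (by simp) (fun t ht => add_pos (sinh_pos_iff.mpr ht)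
      (mul_pos ht (by rw [cosh_sub_sinh]; exact exp_pos _))) hx

lemma four_mul_cosh_sub_four_lt (hx : 0 < x) : 4 * cosh x - 4 < x ^ 2 + x * sinh x := by
  have h₂ : ∀ t, 0 < t → 0 < 2 + t * sinh t - 2 * cosh t := fun _ =>
    pos_of_hasDerivAt_of_pos (f' := fun t => t * cosh t - sinh t)
      (fun t => (((hasDerivAt_const t 2).add ((hasDerivAt_id' t).mul (hasDerivAt_sinh t))).sub
        ((hasDerivAt_cosh t).const_mul 2)).congr_deriv (by ring))
      (by simp) (fun t ht => sub_pos.mpr (sinh_lt_mul_cosh ht))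
  have h₁ : ∀ t, 0 < t → 0 < 2 * t + t * cosh t - 3 * sinh t := fun _ =>
    pos_of_hasDerivAt_of_pos (f' := fun t => 2 + t * sinh t - 2 * cosh t)
      (fun t => ((((hasDerivAt_id' t).const_mul 2).add
        ((hasDerivAt_id' t).mul (hasDerivAt_cosh t))).sub
          ((hasDerivAt_sinh t).const_mul 3)).congr_deriv (by ring))
      (by simp) h₂
  have h₀ : 0 < x ^ 2 + x * sinh x - (4 * cosh x - 4) :=
    pos_of_hasDerivAt_of_pos (f := fun t => t ^ 2 + t * sinh t - (4 * cosh t - 4))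
      (f' := fun t => 2 * t + t * cosh t - 3 * sinh t)
      (fun t => (((hasDerivAt_pow 2 t).add ((hasDerivAt_id' t).mul (hasDerivAt_sinh t))).sub
        (((hasDerivAt_cosh t).const_mul 4).sub_const 4)).congr_deriv (by ring))
      (by simp) h₁ hx
  linarith

lemma two_mul_sinh_sq_lt (hx : 0 < x) : 2 * sinh x ^ 2 < x ^ 2 + x * sinh x * cosh x := by
  have h := four_mul_cosh_sub_four_lt (mul_pos two_pos hx)
  rw [cosh_two_mul, sinh_two_mul, cosh_sq] at h
  linarith

end Real

-- At `x = 0` both sides are `0` by the convention `a / 0 = 0`.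
lemma hfun_div_self (x : ℝ) : hfun x / x = (x * cosh x - sinh x) / (x ^ 2 * sinh x) := by
  rcases eq_or_ne x 0 with rfl | hx
  · simp
  · have hs : sinh x ≠ 0 := sinh_ne_zero.mpr hx
    rw [hfun, if_neg hx]
    field_simp

lemma hfun_div_self_pos (hx : 0 < x) : 0 < hfun x / x := by
  have := sinh_lt_mul_cosh hx
  have := sinh_pos_iff.mpr hx
  rw [hfun_div_self]
  exact div_pos (by linarith) (by positivity)

lemma hfun_div_self_lt_one_third (hx : 0 < x) : hfun x / x < 1 / 3 := by
  have := three_mul_mul_cosh_sub_sinh_lt hx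
  have := sinh_pos_iff.mpr hx
  rw [hfun_div_self, div_lt_div_iff₀ (by positivity) three_pos]
  linarith

lemma one_div_three_mul_cosh_lt_hfun_div_self (hx : 0 < x) :
    1 / (3 * cosh x) < hfun x / x := by
  have hN := pow_three_div_three_lt_mul_cosh_sub_sinh hx
  have hG := sinh_lt_mul_cosh hx
  have := sinh_pos_iff.mpr hx
  have := cosh_pos x
  rw [hfun_div_self, div_lt_div_iff₀ (by positivity) (by positivity)]
  nlinarith [mul_lt_mul_of_pos_left hG (pow_pos hx 2), mul_lt_mul_of_pos_right hN this]

lemma hfun_div_self_lt_one_div (hx : 0 < x) : hfun x / x < 1 / x := by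
  have := mul_cosh_sub_sinh_lt_mul_sinh hx
  have := sinh_pos_iff.mpr hx
  rw [hfun_div_self, div_lt_div_iff₀ (by positivity) hx]
  nlinarith

lemma hasDerivAt_hfun_div_self (hx : 0 < x) :
    HasDerivAt (fun t => hfun t / t)
      (-(x * (x ^ 2 + x * sinh x * cosh x - 2 * sinh x ^ 2)) / (x ^ 2 * sinh x) ^ 2) x := by
  have hD : x ^ 2 * sinh x ≠ 0 := by have := sinh_pos_iff.mpr hx; positivity
  have hD' : HasDerivAt (fun t => t ^ 2 * sinh t) (2 * x * sinh x + x ^ 2 * cosh x) x :=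
    ((hasDerivAt_pow 2 x).mul (hasDerivAt_sinh x)).congr_deriv (by ring)
  simp only [hfun_div_self]
  exact ((hasDerivAt_mul_cosh_sub_sinh x).div hD' hD).congr_deriv
    (by congr 1; linear_combination (-x ^ 3) * cosh_sq_sub_sinh_sq x)

lemma strictAntiOn_hfun_div_self : StrictAntiOn (fun x => hfun x / x) (Ioi 0) :=
  strictAntiOn_of_deriv_neg (convex_Ioi 0)
    (fun _ hx => (hasDerivAt_hfun_div_self hx).continuousAt.continuousWithinAt)
    (fun x hx => by
      rw [interior_Ioi, mem_Ioi] at hx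
      rw [(hasDerivAt_hfun_div_self hx).deriv]
      have := two_mul_sinh_sq_lt hx
      have := sinh_pos_iff.mpr hx
      exact div_neg_of_neg_of_pos (neg_neg_of_pos (mul_pos hx (by linarith))) (by positivity))

lemma exists_hfun_div_self_eq {c : ℝ} (hc₀ : 0 < c) (hc : c < 1 / 3) :
    ∃ x, 0 < x ∧ hfun x / x = c := by
  set t := 1 / (3 * c) with ht_def
  have ht : 1 < t := by rw [lt_div_iff₀ (by positivity)]; linarith
  have ha : 0 < log t := log_pos ht
  have hab : log t ≤ 1 / c := by
    have := log_le_sub_one_of_pos (zero_lt_one.trans ht)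
    have : t ≤ 1 / c := by rw [ht_def]; gcongr; linarith
    linarith
  have hcosh : cosh (log t) < t := by
    rw [cosh_log (zero_lt_one.trans ht)]
    have := inv_lt_one_of_one_lt₀ ht
    linarith
  have hga : c < hfun (log t) / log t := calc
    c = 1 / (3 * t) := by rw [ht_def]; field_simp
    _ < 1 / (3 * cosh (log t)) := one_div_lt_one_div_of_lt (by positivity) (by linarith)
    _ < _ := one_div_three_mul_cosh_lt_hfun_div_self ha
  have hgb : hfun (1 / c) / (1 / c) < c := by
    simpa using hfun_div_self_lt_one_div (one_div_pos.mpr hc₀)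
  have hcont : ContinuousOn (fun x => hfun x / x) (Icc (log t) (1 / c)) :=
    fun y hy =>
      (hasDerivAt_hfun_div_self (ha.trans_le hy.1)).continuousAt.continuousWithinAt
  obtain ⟨x, hx, hgx⟩ := intermediate_value_Icc' hab hcont ⟨hgb.le, hga.le⟩
  exact ⟨x, ha.trans_le hx.1, hgx⟩

lemma eq_mul_hfun_iff {K ξ : ℝ} (hξ : ξ ≠ 0) :
    ξ = K * hfun ξ ↔ K * (hfun ξ / ξ) = 1 := by
  rw [← mul_div_assoc, div_eq_one_iff_eq hξ, eq_comm]

theorem exists_unique_pos_fixed_point_iff_general (β J : ℝ) :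
    (∃! ξ : ℝ, 0 < ξ ∧ ξ = β * J * hfun ξ) ↔ 3 < β * J := by
  set K := β * J
  constructor
  · rintro ⟨ξ, ⟨hξ, hfix⟩, -⟩
    rw [eq_mul_hfun_iff hξ.ne'] at hfix
    nlinarith [hfun_div_self_pos hξ, hfun_div_self_lt_one_third hξ]
  · intro hK
    have hK₀ : K ≠ 0 := by positivity
    obtain ⟨ξ, hξ, hgξ⟩ := exists_hfun_div_self_eq (c := 1 / K) (by positivity)
      (by gcongr)
    refine ⟨ξ, ⟨hξ, by rw [eq_mul_hfun_iff hξ.ne', hgξ]; field_simp⟩, ?_⟩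
    rintro y ⟨hy, hfix⟩
    rw [eq_mul_hfun_iff hy.ne'] at hfix
    exact strictAntiOn_hfun_div_self.injOn hy hξ <|
      hgξ ▸ eq_one_div_of_mul_eq_one_right hfix

/-- The equation `ξ = βJ h(ξ)` admits a unique solution `ξ > 0`
if and only if `βJ > 3`. -/
theorem exists_unique_pos_fixed_point_iff (β J : ℝ) (hβ : 0 < β) (hJ : 0 < J) :
    (∃! ξ : ℝ, 0 < ξ ∧ ξ = β * J * hfun ξ) ↔ 3 < β * J :=
  exists_unique_pos_fixed_point_iff_general β J
end

section
/- Barbalat's lemma: if f : [0,∞) → ℝ is uniformly continuous and the limit lim_{t→∞} ∫₀ᵗ f(s) ds exists and is finite, then f(t) → 0 as t → ∞. -/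
open MeasureTheory Filter

/-- Barbalat's lemma: if `f : [0,∞) → ℝ` is uniformly continuous and
`lim_{t→∞} ∫₀ᵗ f(s) ds` exists and is finite, then `f(t) → 0` as `t → ∞`. -/
theorem barbalat (f : ℝ → ℝ)
    (hf : UniformContinuousOn f (Set.Ici 0))
    (hint : ∀ t : ℝ, IntervalIntegrable f volume 0 t)
    (hlim : ∃ L : ℝ, Tendsto (fun t => ∫ s in (0:ℝ)..t, f s) atTop (nhds L)) :
    Tendsto f atTop (nhds 0) := by
  obtain ⟨L, hL⟩ := hlim
  by_contra hcon
  rw [Metric.tendsto_atTop] at hcon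
  push_neg at hcon
  obtain ⟨ε, hε, hbad⟩ := hcon
  rw [Metric.uniformContinuousOn_iff] at hf
  obtain ⟨δ, hδ, hδf⟩ := hf (ε/2) (by positivity)
  set c := δ/2 with hc
  have hc0 : 0 < c := by positivity
  have h1 : Tendsto (fun t => (∫ s in (0:ℝ)..(t+c), f s) - ∫ s in (0:ℝ)..t, f s)
      atTop (nhds (L - L)) :=
    (hL.comp (tendsto_atTop_add_const_right _ c tendsto_id)).sub hL
  rw [sub_self] at h1
  obtain ⟨N, hN⟩ := (Metric.tendsto_atTop.mp h1) (ε*c/2) (by positivity)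
  obtain ⟨t, ht, htf⟩ := hbad (max N 0)
  have ht0 : (0:ℝ) ≤ t := le_trans (le_max_right N 0) ht
  have htN : N ≤ t := le_trans (le_max_left N 0) ht
  have hkey := hN t htN
  have hadd := intervalIntegral.integral_add_adjacent_intervals (μ := volume)
    (hint t) ((hint t).symm.trans (hint (t+c)))
  have hdiff : (∫ s in (0:ℝ)..(t+c), f s) - ∫ s in (0:ℝ)..t, f s
      = ∫ s in t..(t+c), f s := by linarith
  rw [hdiff, Real.dist_eq, sub_zero] at hkey
  rw [Real.dist_eq, sub_zero] at htf
  have hclose : ∀ s ∈ Set.Icc t (t+c), |f s - f t| < ε/2 := by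
    intro s hs
    have hs0 : s ∈ Set.Ici (0:ℝ) := le_trans ht0 hs.1
    have := hδf s hs0 t (by exact ht0)
    rw [Real.dist_eq, Real.dist_eq] at this
    apply this
    rw [abs_of_nonneg (by linarith [hs.1])]
    have : c < δ := by rw [hc]; linarith
    linarith [hs.2]
  have hii : IntervalIntegrable f volume t (t+c) := (hint t).symm.trans (hint (t+c))
  rcases abs_cases (f t) with ⟨heq, hsgn⟩ | ⟨heq, hsgn⟩
  · -- f t ≥ ε > 0
    have hft : ε ≤ f t := by linarith
    have hlow : ε * c / 2 ≤ ∫ s in t..(t+c), f s := by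
      have h1 : ∫ s in t..(t+c), (ε/2 : ℝ) ≤ ∫ s in t..(t+c), f s := by
        apply intervalIntegral.integral_mono_on (by linarith) intervalIntegrable_const hii
        intro s hs
        have := hclose s hs
        have := abs_lt.mp this
        linarith [this.1]
      rw [intervalIntegral.integral_const, smul_eq_mul] at h1
      nlinarith
    have := abs_lt.mp hkey
    linarith [this.2]
  · -- f t ≤ -ε
    have hft : f t ≤ -ε := by linarith
    have hhigh : ∫ s in t..(t+c), f s ≤ -(ε * c / 2) := by
      have h1 : ∫ s in t..(t+c), f s ≤ ∫ s in t..(t+c), (-(ε/2) : ℝ) := by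
        apply intervalIntegral.integral_mono_on (by linarith) hii intervalIntegrable_const
        intro s hs
        have := abs_lt.mp (hclose s hs)
        linarith [this.2]
      rw [intervalIntegral.integral_const, smul_eq_mul] at h1
      nlinarith
    have := abs_lt.mp hkey
    linarith [this.1]
end

section
/- Let Γ : ℝ → ℝ³ be a C³ curve parametrized by arc length (|Γ'| = 1), and let v, j, γ, λ > 0 and q ∈ ℝ satisfy v²/j = (λ/γ)^{1−q}. Define x_t(z) = Γ(γz + vt), v_t(z) = v Γ'(γz + vt), s_t(z) = v Γ'(γz + vt) × Γ''(γz + vt). Then (x_t, v_t, s_t) solves: ∂_t x_t = v_t; ∂_t v_t = s_t × v_t; ∂_t s_t = (j λ^{1−q} |∂_z x_t|^q / v²) · v_t × ∂_z( ∂_z v_t / |∂_z x_t|³ ). -/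
/-!
All three fields are travelling waves in the phase `γ z + v t`, so `∂ₜ` and `∂_z` both reduce to
derivatives of `Γ`, and `∂_z x_t = γ Γ'` has constant length `γ`. Then `∂ₜ v_t = v² Γ''` equals
`s_t × v_t = v² (Γ' × Γ'') × Γ'` because `Γ'` is a unit vector orthogonal to `Γ''`;
`∂ₜ s_t = v² Γ' × Γ'''` because `Γ'' × Γ'' = 0`; and the right-hand side of the last equation is
`γ · vΓ' × (v γ⁻¹ Γ''') = v² Γ' × Γ'''`, the prefactor `jλ^{1-q}γ^q/v²` being `γ` by the scaling
relation.
-/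

open Matrix

def dot3 (u w : Fin 3 → ℝ) : ℝ := ∑ i, u i * w i

noncomputable def norm3 (u : Fin 3 → ℝ) : ℝ := Real.sqrt (dot3 u u)

section Calculus

variable {𝕜 : Type*} [NontriviallyNormedField 𝕜]

theorem LinearMap.hasDerivAt_of_bilinear [CompleteSpace 𝕜] {E F G : Type*}
    [NormedAddCommGroup E] [NormedSpace 𝕜 E] [FiniteDimensional 𝕜 E]
    [NormedAddCommGroup F] [NormedSpace 𝕜 F] [FiniteDimensional 𝕜 F]
    [NormedAddCommGroup G] [NormedSpace 𝕜 G]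
    (B : E →ₗ[𝕜] F →ₗ[𝕜] G) {u : 𝕜 → E} {w : 𝕜 → F} {u' : E} {w' : F} {x : 𝕜}
    (hu : HasDerivAt u u' x) (hw : HasDerivAt w w' x) :
    HasDerivAt (fun x => B (u x) (w x)) (B (u x) w' + B u' (w x)) x :=
  (LinearMap.toContinuousLinearMap
    (LinearMap.toContinuousLinearMap.toLinearMap ∘ₗ B)).hasDerivAt_of_bilinear
    (fun _ => hu) (fun _ => hw)

variable {E : Type*} [NormedAddCommGroup E] [NormedSpace 𝕜 E] {f : 𝕜 → E} {f' : E}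

theorem HasDerivAt.comp_const_add_mul (a c x : 𝕜) (hf : HasDerivAt f f' (a + c * x)) :
    HasDerivAt (fun x => f (a + c * x)) (c • f') x := by
  have hinner : HasDerivAt (fun x => a + c * x) c x := by
    simpa using ((hasDerivAt_id x).const_mul c).const_add a
  exact hf.scomp x hinner

theorem HasDerivAt.comp_mul_add_const (c x b : 𝕜) (hf : HasDerivAt f f' (c * x + b)) :
    HasDerivAt (fun x => f (c * x + b)) (c • f') x := by
  have hinner : HasDerivAt (fun x => c * x + b) c x := by
    simpa using ((hasDerivAt_id x).const_mul c).add_const b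
  exact hf.scomp x hinner

theorem ContDiff.hasDerivAt_iterate_deriv {n k : ℕ} (hf : ContDiff 𝕜 n f) (hk : k < n) (x : 𝕜) :
    HasDerivAt (deriv^[k] f) (deriv^[k + 1] f x) x := by
  have hk1 : ContDiff 𝕜 (1 : ℕ) (deriv^[k] f) :=
    ContDiff.iterate_deriv' 1 k (hf.of_le (by exact_mod_cast (by omega : 1 + k ≤ n)))
  rw [Function.iterate_succ_apply']
  exact (hk1.differentiable one_ne_zero x).hasDerivAt

end Calculus

theorem HasDerivAt.cross {f g : ℝ → Fin 3 → ℝ} {f' g' : Fin 3 → ℝ} {x : ℝ}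
    (hf : HasDerivAt f f' x) (hg : HasDerivAt g g' x) :
    HasDerivAt (fun t => f t ⨯₃ g t) (f x ⨯₃ g' + f' ⨯₃ g x) x :=
  crossProduct.hasDerivAt_of_bilinear hf hg

theorem HasDerivAt.dotProduct {n : ℕ} {f g : ℝ → Fin n → ℝ} {f' g' : Fin n → ℝ} {x : ℝ}
    (hf : HasDerivAt f f' x) (hg : HasDerivAt g g' x) :
    HasDerivAt (fun t => f t ⬝ᵥ g t) (f x ⬝ᵥ g' + f' ⬝ᵥ g x) x :=
  (dotProductBilin ℝ ℝ).hasDerivAt_of_bilinear hf hg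

theorem dotProduct_eq_zero_of_dotProduct_self_eq {n : ℕ} {f : ℝ → Fin n → ℝ} {f' : Fin n → ℝ}
    {c x : ℝ} (hc : ∀ t, f t ⬝ᵥ f t = c) (hf : HasDerivAt f f' x) : f x ⬝ᵥ f' = 0 := by
  have h := (hf.dotProduct hf).unique (by simpa only [hc] using hasDerivAt_const x c)
  rw [dotProduct_comm f'] at h
  linarith

theorem cross_cross_self_eq {a b : Fin 3 → ℝ} (ha : a ⬝ᵥ a = 1) (hab : a ⬝ᵥ b = 0) :
    a ⨯₃ b ⨯₃ a = b := by
  rw [cross_cross_eq_smul_sub_smul, ha, dotProduct_comm, hab, one_smul, zero_smul, sub_zero]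

theorem dotProduct_self_eq_one_of_norm3_eq_one {u : Fin 3 → ℝ} (hu : norm3 u = 1) : u ⬝ᵥ u = 1 :=
  Real.sqrt_eq_one.mp hu

theorem norm3_smul (c : ℝ) (u : Fin 3 → ℝ) : norm3 (c • u) = |c| * norm3 u := by
  rw [norm3, norm3, show dot3 (c • u) (c • u) = c ^ 2 * dot3 u u from by
    simp only [dot3, Pi.smul_apply, smul_eq_mul, Finset.mul_sum]; ring_nf,
    Real.sqrt_mul (sq_nonneg c), Real.sqrt_sq_eq_abs]

theorem mul_rpow_div_sq_eq_of_sq_div_eq_rpow {v j γ lam q : ℝ} (hj : j ≠ 0)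
    (hγ : 0 < γ) (hlam : 0 < lam) (hrel : v ^ 2 / j = (lam / γ) ^ (1 - q)) :
    j * lam ^ (1 - q) * γ ^ q / v ^ 2 = γ := by
  rw [Real.div_rpow hlam.le hγ.le, div_eq_iff hj] at hrel
  have hlam' : lam ^ (1 - q) ≠ 0 := (Real.rpow_pos_of_pos hlam _).ne'
  have hγ' : γ ^ (1 - q) ≠ 0 := (Real.rpow_pos_of_pos hγ _).ne'
  rw [hrel]
  field_simp
  rw [← Real.rpow_add hγ, add_sub_cancel, Real.rpow_one]

theorem line_flow_solution_general
    (Γ : ℝ → Fin 3 → ℝ) (hΓ : ContDiff ℝ 3 Γ)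
    (harc : ∀ α, norm3 (deriv Γ α) = 1)
    (v j γ lam q : ℝ) (hj : 0 < j) (hγ : 0 < γ) (hlam : 0 < lam)
    (hrel : v ^ 2 / j = (lam / γ) ^ (1 - q)) :
    let x : ℝ → ℝ → Fin 3 → ℝ := fun t z => Γ (γ * z + v * t)
    let vf : ℝ → ℝ → Fin 3 → ℝ := fun t z => v • deriv Γ (γ * z + v * t)
    let sf : ℝ → ℝ → Fin 3 → ℝ := fun t z =>
      v • (deriv Γ (γ * z + v * t) ⨯₃ deriv (deriv Γ) (γ * z + v * t))
    ∀ t z : ℝ,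
      HasDerivAt (fun t' => x t' z) (vf t z) t ∧
      HasDerivAt (fun t' => vf t' z) (sf t z ⨯₃ vf t z) t ∧
      HasDerivAt (fun t' => sf t' z)
        ((j * lam ^ (1 - q) * (norm3 (deriv (fun z' => x t z') z)) ^ q / v ^ 2) •
          (vf t z ⨯₃
            deriv (fun z' =>
              ((norm3 (deriv (fun z'' => x t z'') z')) ^ 3)⁻¹ •
                deriv (fun z'' => vf t z'') z') z)) t := by
  intro x vf sf t z
  have hΓ' : ∀ a, HasDerivAt Γ (deriv Γ a) a :=
    hΓ.hasDerivAt_iterate_deriv (n := 3) (k := 0) (by norm_num)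
  have hΓ'' : ∀ a, HasDerivAt (deriv Γ) (deriv (deriv Γ) a) a :=
    hΓ.hasDerivAt_iterate_deriv (n := 3) (k := 1) (by norm_num)
  have hΓ''' : ∀ a, HasDerivAt (deriv (deriv Γ)) (deriv (deriv (deriv Γ)) a) a :=
    hΓ.hasDerivAt_iterate_deriv (n := 3) (k := 2) (by norm_num)
  have hunit : ∀ a, deriv Γ a ⬝ᵥ deriv Γ a = 1 :=
    fun a => dotProduct_self_eq_one_of_norm3_eq_one (harc a)
  have hortho : ∀ a, deriv Γ a ⬝ᵥ deriv (deriv Γ) a = 0 :=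
    fun a => dotProduct_eq_zero_of_dotProduct_self_eq hunit (hΓ'' a)
  have hspeed : ∀ z', norm3 (deriv (fun z'' => x t z'') z') = γ := fun z' => by
    rw [((hΓ' _).comp_mul_add_const γ z' (v * t)).deriv, norm3_smul, harc, abs_of_pos hγ, mul_one]
  have hvz : ∀ z', deriv (fun z'' => vf t z'') z' = γ • v • deriv (deriv Γ) (γ * z' + v * t) :=
    fun z' => (((hΓ'' _).const_smul v).comp_mul_add_const γ z' (v * t)).deriv
  have hcurv : deriv (fun z' => ((norm3 (deriv (fun z'' => x t z'') z')) ^ 3)⁻¹ •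
      deriv (fun z'' => vf t z'') z') z =
      γ • (γ ^ 3)⁻¹ • γ • v • deriv (deriv (deriv Γ)) (γ * z + v * t) := by
    simp_rw [hspeed, hvz]
    exact ((((hΓ''' _).const_smul v).const_smul γ).const_smul (γ ^ 3)⁻¹
      |>.comp_mul_add_const γ z (v * t)).deriv
  refine ⟨(hΓ' _).comp_const_add_mul _ v t, ?_, ?_⟩
  · refine (((hΓ'' _).const_smul v).comp_const_add_mul (γ * z) v t).congr_deriv ?_
    simp only [sf, vf, map_smul, LinearMap.smul_apply, cross_cross_self_eq (hunit _) (hortho _)]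
  · refine ((((hΓ'' _).cross (hΓ''' _)).const_smul v).comp_const_add_mul (γ * z) v t).congr_deriv ?_
    rw [hspeed, hcurv, mul_rpow_div_sq_eq_of_sq_div_eq_rpow hj.ne' hγ hlam hrel]
    simp only [vf, map_smul, LinearMap.smul_apply, cross_self, add_zero, smul_smul]
    congr 1
    field_simp

/-- For a `C³` arc-length parametrized curve `Γ` and constants with
`v²/j = (λ/γ)^{1−q}`, the triple `x_t(z) = Γ(γz+vt)`, `v_t(z) = vΓ'(γz+vt)`,
`s_t(z) = vΓ'(γz+vt) × Γ''(γz+vt)` solves the zero-range mono-kinetic line equations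
`∂ₜx = v_t`, `∂ₜv_t = s_t × v_t`,
`∂ₜs_t = (jλ^{1−q}|x_t'|^q/v²) v_t × ∂_z(v_t'/|x_t'|³)`. -/
theorem line_flow_solution
    (Γ : ℝ → Fin 3 → ℝ) (hΓ : ContDiff ℝ 3 Γ)
    (harc : ∀ α, norm3 (deriv Γ α) = 1)
    (v j γ lam q : ℝ) (hv : 0 < v) (hj : 0 < j) (hγ : 0 < γ) (hlam : 0 < lam)
    (hrel : v ^ 2 / j = (lam / γ) ^ (1 - q)) :
    let x : ℝ → ℝ → Fin 3 → ℝ := fun t z => Γ (γ * z + v * t)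
    let vf : ℝ → ℝ → Fin 3 → ℝ := fun t z => v • deriv Γ (γ * z + v * t)
    let sf : ℝ → ℝ → Fin 3 → ℝ := fun t z =>
      v • (deriv Γ (γ * z + v * t) ⨯₃ deriv (deriv Γ) (γ * z + v * t))
    ∀ t z : ℝ,
      HasDerivAt (fun t' => x t' z) (vf t z) t ∧
      HasDerivAt (fun t' => vf t' z) (sf t z ⨯₃ vf t z) t ∧
      HasDerivAt (fun t' => sf t' z)
        ((j * lam ^ (1 - q) * (norm3 (deriv (fun z' => x t z') z)) ^ q / v ^ 2) •
          (vf t z ⨯₃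
            deriv (fun z' =>
              ((norm3 (deriv (fun z'' => x t z'') z')) ^ 3)⁻¹ •
                deriv (fun z'' => vf t z'') z') z)) t :=
  line_flow_solution_general Γ hΓ harc v j γ lam q hj hγ hlam hrel
end

section
/- Let σ : [0,∞) → ℝ³ be continuous with σ ∈ L²([0,∞)) and suppose σ(t) → 0 as t → ∞. Let q, w : [0,∞) → ℝ³ be C¹ and bounded, with derivatives bounded by a constant multiple of |σ(t)|, and suppose there are constants a, b, c ∈ ℝ with a > 0 such that d/dt[σ·(q + b w)](t) = a|q(t)|² + c σ(t)·q(t) + σ(t)·(q'(t) + b w'(t)) for all t. Then q ∈ L²([0,∞)). -/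
open MeasureTheory Filter

lemma dot3_self_nonneg (u : Fin 3 → ℝ) : 0 ≤ dot3 u u := by
  simp only [dot3, ← sq]
  positivity

lemma sq_norm3 (u : Fin 3 → ℝ) : norm3 u ^ 2 = dot3 u u :=
  Real.sq_sqrt (dot3_self_nonneg u)

lemma abs_dot3_le (u w : Fin 3 → ℝ) : |dot3 u w| ≤ norm3 u * norm3 w := by
  have h : (dot3 u w) ^ 2 ≤ dot3 u u * dot3 w w := by
    simp only [dot3, Fin.sum_univ_three]
    nlinarith [sq_nonneg (u 0 * w 1 - u 1 * w 0), sq_nonneg (u 0 * w 2 - u 2 * w 0),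
      sq_nonneg (u 1 * w 2 - u 2 * w 1)]
  have := Real.sqrt_le_sqrt h
  rwa [Real.sqrt_sq_eq_abs, Real.sqrt_mul (dot3_self_nonneg u)] at this

lemma dot3_add (u x y : Fin 3 → ℝ) : dot3 u (x + y) = dot3 u x + dot3 u y := by
  simp only [dot3, Fin.sum_univ_three, Pi.add_apply]; ring

lemma dot3_smul (u x : Fin 3 → ℝ) (r : ℝ) : dot3 u (r • x) = r * dot3 u x := by
  simp only [dot3, Fin.sum_univ_three, Pi.smul_apply, smul_eq_mul]; ring

lemma cont_dot3 {f g : ℝ → Fin 3 → ℝ} (hf : Continuous f) (hg : Continuous g) :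
    Continuous (fun t => dot3 (f t) (g t)) := by
  simp only [dot3, Fin.sum_univ_three]
  fun_prop

set_option maxHeartbeats 1000000 in
/-- Abstract core of Lemma 3.2: if `σ` is continuous, square-integrable on `[0,∞)` and
tends to `0`, `q` and `w` are `C¹` and bounded with derivatives bounded by a multiple
of `|σ|`, and `d/dt[σ·(q + b w)] = a|q|² + c σ·q + σ·(q' + b w')` with `a > 0`,
then `q ∈ L²([0,∞))`. -/
theorem q_square_integrable
    (σ q w q' w' : ℝ → Fin 3 → ℝ)
    (hσ_cont : Continuous σ)
    (hσ_L2 : IntegrableOn (fun t => dot3 (σ t) (σ t)) (Set.Ici 0))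
    (hσ_lim : Tendsto σ atTop (nhds 0))
    (hq : ∀ t, HasDerivAt q (q' t) t) (hw : ∀ t, HasDerivAt w (w' t) t)
    (hbdd : ∃ C, ∀ t, norm3 (q t) ≤ C ∧ norm3 (w t) ≤ C)
    (hder_bdd : ∃ C, ∀ t, norm3 (q' t) ≤ C * norm3 (σ t) ∧
                          norm3 (w' t) ≤ C * norm3 (σ t))
    (a b c : ℝ) (ha : 0 < a)
    (hident : ∀ t, HasDerivAt (fun s => dot3 (σ s) (q s + b • w s))
      (a * dot3 (q t) (q t) + c * dot3 (σ t) (q t)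
        + dot3 (σ t) (q' t + b • w' t)) t) :
    IntegrableOn (fun t => dot3 (q t) (q t)) (Set.Ici 0) := by
  obtain ⟨C, hC⟩ := hbdd
  obtain ⟨C₀, hC₀⟩ := hder_bdd
  -- replace C₀ by a nonnegative constant
  set C' : ℝ := max C₀ 0 with hC'def
  have hC'nn : 0 ≤ C' := le_max_right _ _
  have hC' : ∀ t, norm3 (q' t) ≤ C' * norm3 (σ t) ∧ norm3 (w' t) ≤ C' * norm3 (σ t) := by
    intro t
    have hm : C₀ * norm3 (σ t) ≤ C' * norm3 (σ t) :=
      mul_le_mul_of_nonneg_right (le_max_left _ _) (Real.sqrt_nonneg _)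
    exact ⟨le_trans (hC₀ t).1 hm, le_trans (hC₀ t).2 hm⟩
  have hC0 : 0 ≤ C := le_trans (Real.sqrt_nonneg _) (hC 0).1
  have hq_cont : Continuous q := continuous_iff_continuousAt.mpr fun t => (hq t).continuousAt
  have hw_cont : Continuous w := continuous_iff_continuousAt.mpr fun t => (hw t).continuousAt
  -- S = |σ|²
  set S : ℝ → ℝ := fun t => dot3 (σ t) (σ t) with hS_def
  have hS_cont : Continuous S := cont_dot3 hσ_cont hσ_cont
  have hS_nonneg : ∀ t, 0 ≤ S t := fun t => dot3_self_nonneg _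
  -- boundedness of S (hence of norm3 σ) on [0,∞)
  have hS_lim : Tendsto S atTop (nhds 0) := by
    have hc : Tendsto (fun u : Fin 3 → ℝ => dot3 u u) (nhds 0) (nhds (dot3 0 0)) := by
      apply Continuous.tendsto
      simp only [dot3, Fin.sum_univ_three]; fun_prop
    have : dot3 (0 : Fin 3 → ℝ) 0 = 0 := by simp [dot3]
    rw [this] at hc
    exact hc.comp hσ_lim
  obtain ⟨Mσ, hMσ⟩ : ∃ M, ∀ t ∈ Set.Ici (0:ℝ), S t ≤ M := by
    have hev : ∀ᶠ t in atTop, S t ≤ 1 :=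
      hS_lim.eventually (eventually_le_nhds (by norm_num : (0:ℝ) < 1))
    obtain ⟨N, hN⟩ := hev.exists_forall_of_atTop
    obtain ⟨M0, hM0⟩ := (isCompact_Icc (a := (0:ℝ)) (b := N)).exists_bound_of_continuousOn
      hS_cont.continuousOn
    refine ⟨max M0 1, fun t ht => ?_⟩
    rcases le_total t N with h | h
    · exact le_trans (le_trans (le_abs_self _) (by simpa using hM0 t ⟨ht, h⟩)) (le_max_left _ _)
    · exact le_trans (hN t h) (le_max_right _ _)
  -- F = σ·(q+bw) is bounded on [0,∞)
  set F : ℝ → ℝ := fun s => dot3 (σ s) (q s + b • w s) with hF_def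
  set MF : ℝ := Real.sqrt Mσ * (C + |b| * C) with hMF_def
  have hF_bdd : ∀ t ∈ Set.Ici (0:ℝ), |F t| ≤ MF := by
    intro t ht
    have h1 : |F t| ≤ |dot3 (σ t) (q t)| + |b| * |dot3 (σ t) (w t)| := by
      rw [hF_def]; simp only
      rw [dot3_add, dot3_smul]
      calc |dot3 (σ t) (q t) + b * dot3 (σ t) (w t)| ≤ _ := abs_add_le _ _
        _ = _ := by rw [abs_mul]
    have hσb : norm3 (σ t) ≤ Real.sqrt Mσ := by
      rw [norm3]; exact Real.sqrt_le_sqrt (hMσ t ht)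
    have hσ0 : 0 ≤ norm3 (σ t) := Real.sqrt_nonneg _
    have h2 := abs_dot3_le (σ t) (q t)
    have h3 := abs_dot3_le (σ t) (w t)
    have hCq := (hC t).1
    have hCw := (hC t).2
    have hq0 : 0 ≤ norm3 (q t) := Real.sqrt_nonneg _
    have hw0 : 0 ≤ norm3 (w t) := Real.sqrt_nonneg _
    have hq1 : |dot3 (σ t) (q t)| ≤ Real.sqrt Mσ * C :=
      le_trans h2 (mul_le_mul hσb hCq hq0 (Real.sqrt_nonneg _))
    have hw1 : |dot3 (σ t) (w t)| ≤ Real.sqrt Mσ * C :=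
      le_trans h3 (mul_le_mul hσb hCw hw0 (Real.sqrt_nonneg _))
    have hw2 : |b| * |dot3 (σ t) (w t)| ≤ |b| * (Real.sqrt Mσ * C) :=
      mul_le_mul_of_nonneg_left hw1 (abs_nonneg b)
    rw [hMF_def]
    nlinarith [abs_nonneg b, Real.sqrt_nonneg Mσ]
  have hMF0 : 0 ≤ MF := by
    exact le_trans (abs_nonneg _) (hF_bdd 0 Set.self_mem_Ici)
  -- A = σ·(q'+bw'), measurable, |A| ≤ K·S
  set A : ℝ → ℝ := fun t => dot3 (σ t) (q' t + b • w' t) with hA_def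
  have hq'_meas : Measurable q' := by
    have : q' = deriv q := funext fun t => ((hq t).deriv).symm
    rw [this]; exact measurable_deriv q
  have hw'_meas : Measurable w' := by
    have : w' = deriv w := funext fun t => ((hw t).deriv).symm
    rw [this]; exact measurable_deriv w
  have hA_meas : Measurable A := by
    have m : ∀ (f : ℝ → Fin 3 → ℝ), Measurable f → ∀ i, Measurable fun t => f t i :=
      fun f hf i => hf.eval
    rw [hA_def]
    simp only [dot3, Fin.sum_univ_three, Pi.add_apply, Pi.smul_apply, smul_eq_mul]
    exact (((m σ hσ_cont.measurable 0).mul ((m q' hq'_meas 0).add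
        (measurable_const.mul (m w' hw'_meas 0)))).add
      ((m σ hσ_cont.measurable 1).mul ((m q' hq'_meas 1).add
        (measurable_const.mul (m w' hw'_meas 1))))).add
      ((m σ hσ_cont.measurable 2).mul ((m q' hq'_meas 2).add
        (measurable_const.mul (m w' hw'_meas 2))))
  set K : ℝ := C' + |b| * C' with hK_def
  have hK0 : 0 ≤ K := by positivity
  have hA_bound : ∀ t, |A t| ≤ K * S t := by
    intro t
    have h1 : |A t| ≤ |dot3 (σ t) (q' t)| + |b| * |dot3 (σ t) (w' t)| := by
      rw [hA_def]; simp only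
      rw [dot3_add, dot3_smul]
      calc |dot3 (σ t) (q' t) + b * dot3 (σ t) (w' t)| ≤ _ := abs_add_le _ _
        _ = _ := by rw [abs_mul]
    have h2 := abs_dot3_le (σ t) (q' t)
    have h3 := abs_dot3_le (σ t) (w' t)
    have hσ0 : 0 ≤ norm3 (σ t) := Real.sqrt_nonneg _
    have hq0 : 0 ≤ norm3 (q' t) := Real.sqrt_nonneg _
    have hw0 : 0 ≤ norm3 (w' t) := Real.sqrt_nonneg _
    have hsq : norm3 (σ t) * norm3 (σ t) = S t := by
      have := sq_norm3 (σ t); rw [sq] at this; exact this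
    have hq' := (hC' t).1
    have hw' := (hC' t).2
    have hq1 : |dot3 (σ t) (q' t)| ≤ C' * S t := by
      refine le_trans h2 (le_trans (mul_le_mul_of_nonneg_left hq' hσ0) (le_of_eq ?_))
      rw [← hsq]; ring
    have hw1 : |dot3 (σ t) (w' t)| ≤ C' * S t := by
      refine le_trans h3 (le_trans (mul_le_mul_of_nonneg_left hw' hσ0) (le_of_eq ?_))
      rw [← hsq]; ring
    have hw2 : |b| * |dot3 (σ t) (w' t)| ≤ |b| * (C' * S t) :=
      mul_le_mul_of_nonneg_left hw1 (abs_nonneg b)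
    rw [hK_def]
    nlinarith [abs_nonneg b]
  have hA_int : IntegrableOn A (Set.Ici 0) := by
    refine (hσ_L2.const_mul K).mono' hA_meas.aestronglyMeasurable (ae_of_all _ fun t => ?_)
    simpa [Real.norm_eq_abs] using hA_bound t
  -- integral bounds
  set MA : ℝ := ∫ t in Set.Ici (0:ℝ), |A t| with hMA_def
  set MS : ℝ := ∫ t in Set.Ici (0:ℝ), S t with hMS_def
  have hMS0 : 0 ≤ MS := setIntegral_nonneg measurableSet_Ici fun t _ => hS_nonneg t
  have hIocIci : ∀ T : ℝ, Set.Ioc (0:ℝ) T ⊆ Set.Ici 0 := fun T x hx => le_of_lt hx.1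
  have hA_intT : ∀ T : ℝ, ∫ t in (0:ℝ)..T, |A t| ≤ MA := by
    intro T
    rcases le_total T 0 with h | h
    · rw [intervalIntegral.integral_of_ge h]
      have : 0 ≤ ∫ t in Set.Ioc T 0, |A t| :=
        setIntegral_nonneg measurableSet_Ioc fun t _ => abs_nonneg _
      have hMA0 : 0 ≤ MA := setIntegral_nonneg measurableSet_Ici fun t _ => abs_nonneg _
      linarith
    · rw [intervalIntegral.integral_of_le h]
      exact setIntegral_mono_set hA_int.abs
        (ae_of_all _ fun t => abs_nonneg _)
        ((hIocIci T).eventuallyLE)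
  have hS_intT : ∀ T : ℝ, 0 ≤ T → ∫ t in (0:ℝ)..T, S t ≤ MS := by
    intro T h
    rw [intervalIntegral.integral_of_le h]
    exact setIntegral_mono_set hσ_L2
      (ae_of_all _ fun t => hS_nonneg t)
      ((hIocIci T).eventuallyLE)
  -- the continuous part g and nonnegative square h
  set g : ℝ → ℝ := fun t => a * dot3 (q t) (q t) + c * dot3 (σ t) (q t) with hg_def
  have hg_cont : Continuous g := by
    apply Continuous.add
    · exact continuous_const.mul (cont_dot3 hq_cont hq_cont)
    · exact continuous_const.mul (cont_dot3 hσ_cont hq_cont)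
  set v : ℝ := c / (2 * a) with hv_def
  set h : ℝ → ℝ := fun t => a * dot3 (q t + v • σ t) (q t + v • σ t) with hh_def
  have hh_cont : Continuous h := by
    refine continuous_const.mul (cont_dot3 ?_ ?_) <;>
      exact hq_cont.add (hσ_cont.const_smul v)
  have hh_nonneg : ∀ t, 0 ≤ h t := fun t => mul_nonneg ha.le (dot3_self_nonneg _)
  have hh_eq : ∀ t, h t = g t + (c ^ 2 / (4 * a)) * S t := by
    intro t
    rw [hh_def, hg_def, hS_def, hv_def]
    simp only [dot3, Fin.sum_univ_three, Pi.add_apply, Pi.smul_apply, smul_eq_mul]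
    field_simp
    ring
  -- FTC on [0, T]
  have hA_ii : ∀ T : ℝ, 0 ≤ T → IntervalIntegrable A volume 0 T := by
    intro T hT
    rw [intervalIntegrable_iff_integrableOn_Ioc_of_le hT]
    exact hA_int.mono_set (hIocIci T)
  have hFTC : ∀ T : ℝ, 0 ≤ T → ∫ t in (0:ℝ)..T, (g t + A t) = F T - F 0 := by
    intro T hT
    refine intervalIntegral.integral_eq_sub_of_hasDerivAt (fun t _ => ?_) ?_
    · have := hident t
      simpa [hg_def, hA_def, hF_def, add_assoc] using this
    · exact (hg_cont.intervalIntegrable 0 T).add (hA_ii T hT)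
  -- uniform bound on ∫₀ᵀ h
  set I : ℝ := MF + MF + MA + (c ^ 2 / (4 * a)) * MS with hI_def
  have hh_bound : ∀ T : ℝ, 0 ≤ T → ∫ t in (0:ℝ)..T, h t ≤ I := by
    intro T hT
    have hgA := hFTC T hT
    have hsplit : ∫ t in (0:ℝ)..T, h t
        = (∫ t in (0:ℝ)..T, (g t + A t)) - (∫ t in (0:ℝ)..T, A t)
          + (c ^ 2 / (4 * a)) * ∫ t in (0:ℝ)..T, S t := by
      have e1 : ∫ t in (0:ℝ)..T, h t
          = (∫ t in (0:ℝ)..T, g t) + (c ^ 2 / (4 * a)) * ∫ t in (0:ℝ)..T, S t := by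
        rw [← intervalIntegral.integral_const_mul, ← intervalIntegral.integral_add
          (hg_cont.intervalIntegrable 0 T)
          ((hS_cont.intervalIntegrable 0 T).const_mul _)]
        exact intervalIntegral.integral_congr fun t _ => hh_eq t
      have e2 : ∫ t in (0:ℝ)..T, (g t + A t)
          = (∫ t in (0:ℝ)..T, g t) + ∫ t in (0:ℝ)..T, A t :=
        intervalIntegral.integral_add (hg_cont.intervalIntegrable 0 T) (hA_ii T hT)
      rw [e1, e2]; ring
    have hAabs : |∫ t in (0:ℝ)..T, A t| ≤ MA := by
      refine le_trans ?_ (hA_intT T)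
      exact intervalIntegral.abs_integral_le_integral_abs hT
    have hFT := hF_bdd T hT
    have hF0 := hF_bdd 0 Set.self_mem_Ici
    have hSle := hS_intT T hT
    have hc4 : 0 ≤ c ^ 2 / (4 * a) := by positivity
    rw [hsplit, hgA, hI_def]
    have h1 : F T - F 0 ≤ MF + MF := by
      have := abs_le.mp hFT
      have := abs_le.mp hF0
      cases abs_le.mp hFT; cases abs_le.mp hF0; linarith
    have h2 : -(∫ t in (0:ℝ)..T, A t) ≤ MA := by
      cases abs_le.mp hAabs; linarith
    have h3 : (c ^ 2 / (4 * a)) * ∫ t in (0:ℝ)..T, S t ≤ (c ^ 2 / (4 * a)) * MS :=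
      mul_le_mul_of_nonneg_left hSle hc4
    linarith
  -- h is integrable on [0, ∞)
  have hh_int : IntegrableOn h (Set.Ici 0) := by
    rw [integrableOn_Ici_iff_integrableOn_Ioi]
    refine integrableOn_Ioi_of_intervalIntegral_norm_bounded I 0
      (b := fun T : ℝ => T) (l := atTop) (fun i => ?_) tendsto_id ?_
    · exact hh_cont.integrableOn_Ioc
    · filter_upwards [eventually_ge_atTop (0:ℝ)] with T hT
      have : ∫ x in (0:ℝ)..T, ‖h x‖ = ∫ x in (0:ℝ)..T, h x :=
        intervalIntegral.integral_congr fun t _ =>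
          by rw [Real.norm_eq_abs, abs_of_nonneg (hh_nonneg t)]
      rw [this]
      exact hh_bound T hT
  -- conclude: |q|² ≤ (2/a) h + 2 v² S pointwise
  have hfinal : ∀ t, dot3 (q t) (q t) ≤ (2 / a) * h t + (2 * v ^ 2) * S t := by
    intro t
    rw [hh_def, hS_def]
    simp only [dot3, Fin.sum_univ_three, Pi.add_apply, Pi.smul_apply, smul_eq_mul]
    have e : (2 / a) * (a * ((q t 0 + v * σ t 0) * (q t 0 + v * σ t 0)
        + (q t 1 + v * σ t 1) * (q t 1 + v * σ t 1)
        + (q t 2 + v * σ t 2) * (q t 2 + v * σ t 2)))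
        = 2 * ((q t 0 + v * σ t 0) * (q t 0 + v * σ t 0)
        + (q t 1 + v * σ t 1) * (q t 1 + v * σ t 1)
        + (q t 2 + v * σ t 2) * (q t 2 + v * σ t 2)) := by
      field_simp
    rw [e]
    nlinarith [sq_nonneg (q t 0 + 2 * v * σ t 0), sq_nonneg (q t 1 + 2 * v * σ t 1),
      sq_nonneg (q t 2 + 2 * v * σ t 2)]
  refine ((hh_int.const_mul (2 / a)).add (hσ_L2.const_mul (2 * v ^ 2))).mono'
    (cont_dot3 hq_cont hq_cont).aestronglyMeasurable.restrict (ae_of_all _ fun t => ?_)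
  rw [Real.norm_eq_abs, abs_of_nonneg (dot3_self_nonneg _)]
  exact hfinal t
end
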